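/- For any directed path π as above, there exist constants c, C > 0 such that c n² ≤ 𝟙_π^T A_n² 𝟙_π ≤ C n² for all n ≥ 2. -/

import Mathlib

/-- The vertex set `V_n = {(i,u) ∈ ℤ² : 0 ≤ i < n, |u| ≤ i, i - u even}`. -/
noncomputable def triVertices (n : ℕ) : Finset (ℤ × ℤ) :=
  (Finset.Icc (-(n : ℤ)) n ×ˢ Finset.Icc (-(n : ℤ)) n).filter
    (fun p => 0 ≤ p.1 ∧ p.1 < n ∧ |p.2| ≤ p.1 ∧ (p.1 - p.2) % 2 = 0)

/-- The matrix entry: `A[(i,u),(j,v)] = 1/|i-j|` if `i ≠ j` and `|u-v| ≤ |i-j|`,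
and `0` otherwise. -/
noncomputable def triEntry (p q : ℤ × ℤ) : ℝ :=
  if p.1 ≠ q.1 ∧ |p.2 - q.2| ≤ |p.1 - q.1| then |(p.1 : ℝ) - (q.1 : ℝ)|⁻¹ else 0

/-!
Column `k` contributes to `(A_n²)[π_i, π_j]` only through vertices in both light cones, of which
there are at most `2 min(|i - k|, |j - k|) + 1`; so it contributes at most
`3 min(|i - k|⁻¹, |j - k|⁻¹)`, which sums to `O(n)` over `i, j < n`, hence `O(n²)` over all columns.
Conversely, for `i, j < n / 4` the forward cone of `π_(max i j)` lies in both cones, because the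
path is 1-Lipschitz, and it has `≳ n²` vertices in the columns `k ≥ n / 2`, each contributing at
least `1 / n²`; so each of the `≳ n²` such pairs contributes a constant.
-/

open Finset

-- The side condition `p.1 ≠ q.1` of `triEntry` is absorbed by `0⁻¹ = 0`.
lemma triEntry_eq_ite (p q : ℤ × ℤ) :
    triEntry p q = if |p.2 - q.2| ≤ |p.1 - q.1| then |(p.1 : ℝ) - q.1|⁻¹ else 0 := by
  unfold triEntry
  by_cases h : p.1 = q.1 <;> simp [h]

lemma triEntry_comm (p q : ℤ × ℤ) : triEntry p q = triEntry q p := by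
  simp only [triEntry_eq_ite, abs_sub_comm]

lemma triEntry_nonneg (p q : ℤ × ℤ) : 0 ≤ triEntry p q := by
  rw [triEntry_eq_ite]; split_ifs <;> positivity

lemma triEntry_le (p q : ℤ × ℤ) : triEntry p q ≤ |(p.1 : ℝ) - q.1|⁻¹ := by
  rw [triEntry_eq_ite]; split_ifs
  exacts [le_rfl, by positivity]

lemma inv_le_triEntry_of_lt {n : ℕ} {a u k v : ℤ} (hak : a < k) (hkn : k - a ≤ n)
    (huv : |u - v| ≤ k - a) : (n : ℝ)⁻¹ ≤ triEntry (a, u) (k, v) := by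
  have hdist : |a - k| = k - a := by rw [abs_sub_comm, abs_of_pos (sub_pos.mpr hak)]
  rw [triEntry_eq_ite, if_pos (hdist ▸ huv)]
  have hcast : |(a : ℝ) - k| = ((k - a : ℤ) : ℝ) := by rw [← hdist]; push_cast; rfl
  rw [hcast]
  exact inv_anti₀ (by exact_mod_cast sub_pos.mpr hak) (by exact_mod_cast hkn)

lemma mem_triVertices {n : ℕ} {q : ℤ × ℤ} :
    q ∈ triVertices n ↔ 0 ≤ q.1 ∧ q.1 < n ∧ |q.2| ≤ q.1 ∧ (q.1 - q.2) % 2 = 0 := by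
  simp only [triVertices, mem_filter, mem_product, mem_Icc, and_iff_right_iff_imp]
  rintro ⟨h0, hn, hq, -⟩
  rw [abs_le] at hq
  omega

noncomputable def triSqEntry (n : ℕ) (x y : ℤ × ℤ) : ℝ :=
  ∑ q ∈ triVertices n, triEntry x q * triEntry q y

lemma triSqEntry_nonneg (n : ℕ) (x y : ℤ × ℤ) : 0 ≤ triSqEntry n x y :=
  sum_nonneg fun _ _ => mul_nonneg (triEntry_nonneg _ _) (triEntry_nonneg _ _)

noncomputable def pathQuadForm (n : ℕ) (p : ℕ → ℤ) : ℝ :=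
  ∑ i ∈ range n, ∑ j ∈ range n, triSqEntry n ((i : ℤ), p i) ((j : ℤ), p j)

lemma card_filter_abs_sub_le {ι : Type*} (s : Finset ι) {f : ι → ℤ} (hf : f.Injective)
    (c : ℤ) {D : ℤ} (hD : 0 ≤ D) : (#{a ∈ s | |f a - c| ≤ D} : ℝ) ≤ 2 * D + 1 := by
  have hcard : #{a ∈ s | |f a - c| ≤ D} ≤ #(Icc (c - D) (c + D)) :=
    card_le_card_of_injOn f (fun a ha => by
      simp only [coe_filter, Set.mem_ofPred_eq, abs_le] at ha
      simp only [coe_Icc, Set.mem_Icc]; omega) hf.injOn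
  rw [Int.card_Icc, show c + D + 1 - (c - D) = 2 * D + 1 by ring] at hcard
  have : ((#{a ∈ s | |f a - c| ≤ D} : ℕ) : ℤ) ≤ 2 * D + 1 := by omega
  exact_mod_cast this

lemma two_mul_add_one_mul_inv_le_three {D : ℤ} (hD : 0 ≤ D) :
    (2 * D + 1 : ℝ) * (D : ℝ)⁻¹ ≤ 3 := by
  rcases hD.eq_or_lt with rfl | hpos
  · simp
  · have hD1 : (1 : ℝ) ≤ D := by exact_mod_cast hpos
    rw [add_mul, mul_assoc, mul_inv_cancel₀ (by positivity), one_mul]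
    linarith [inv_le_one_of_one_le₀ hD1]

lemma sum_triEntry_mul_triEntry_le (s : Finset ℤ) (a u b w k : ℤ) :
    ∑ v ∈ s, triEntry (a, u) (k, v) * triEntry (k, v) (b, w) ≤ 3 * |(b : ℝ) - k|⁻¹ := by
  set x : ℝ := ((|a - k| : ℤ) : ℝ)⁻¹
  set y : ℝ := |(b : ℝ) - k|⁻¹
  have hterm : ∀ v ∈ s, triEntry (a, u) (k, v) * triEntry (k, v) (b, w) ≤
      if |v - u| ≤ |a - k| then x * y else 0 := by
    intro v _
    rw [triEntry_eq_ite, abs_sub_comm u v]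
    split_ifs
    · refine mul_le_mul (by simp [x]) ?_ (triEntry_nonneg _ _) (by positivity)
      simpa [y, abs_sub_comm] using triEntry_le (k, v) (b, w)
    · simp
  calc ∑ v ∈ s, triEntry (a, u) (k, v) * triEntry (k, v) (b, w)
      ≤ ∑ v ∈ s, if |v - u| ≤ |a - k| then x * y else 0 := sum_le_sum hterm
    _ = #{v ∈ s | |v - u| ≤ |a - k|} * (x * y) := by
      rw [← sum_filter, sum_const, nsmul_eq_mul]
    _ ≤ (2 * |a - k| + 1 : ℝ) * (x * y) := by
      gcongr
      exact_mod_cast card_filter_abs_sub_le s Function.injective_id u (abs_nonneg (a - k))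
    _ = ((2 * |a - k| + 1 : ℝ) * x) * y := by ring
    _ ≤ 3 * y := by
      gcongr
      exact_mod_cast two_mul_add_one_mul_inv_le_three (abs_nonneg (a - k))

lemma sum_triEntry_mul_triEntry_le_min (s : Finset ℤ) (a u b w k : ℤ) :
    ∑ v ∈ s, triEntry (a, u) (k, v) * triEntry (k, v) (b, w) ≤
      3 * min |(a : ℝ) - k|⁻¹ |(b : ℝ) - k|⁻¹ := by
  rw [mul_min_of_nonneg _ _ (by norm_num : (0 : ℝ) ≤ 3)]
  refine le_min ?_ (sum_triEntry_mul_triEntry_le s a u b w k)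
  simp_rw [triEntry_comm (a, u), triEntry_comm _ (b, w), mul_comm (triEntry _ (a, u))]
  exact sum_triEntry_mul_triEntry_le s b w a u k

lemma sum_sum_min_le {ι α : Type*} [LinearOrder α] (s : Finset ι) {x : ι → ℝ}
    (hx : ∀ i ∈ s, 0 ≤ x i) (D : ι → α) :
    ∑ i ∈ s, ∑ j ∈ s, min (x i) (x j) ≤ 2 * ∑ i ∈ s, x i * #{j ∈ s | D j ≤ D i} := by
  have hpt : ∀ i ∈ s, ∀ j ∈ s, min (x i) (x j) ≤
      (if D j ≤ D i then x i else 0) + (if D i ≤ D j then x j else 0) := by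
    intro i hi j hj
    rcases le_total (D j) (D i) with h | h
    · simp only [if_pos h]; split_ifs <;> linarith [min_le_left (x i) (x j), hx j hj]
    · simp only [if_pos h]; split_ifs <;> linarith [min_le_right (x i) (x j), hx i hi]
  have hrow : ∀ i, ∑ j ∈ s, (if D j ≤ D i then x i else 0) = x i * #{j ∈ s | D j ≤ D i} := by
    intro i; rw [← sum_filter, sum_const, nsmul_eq_mul, mul_comm]
  calc ∑ i ∈ s, ∑ j ∈ s, min (x i) (x j)
      ≤ ∑ i ∈ s, ∑ j ∈ s, ((if D j ≤ D i then x i else 0) + (if D i ≤ D j then x j else 0)) :=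
        sum_le_sum fun i hi => sum_le_sum fun j hj => hpt i hi j hj
    _ = 2 * ∑ i ∈ s, x i * #{j ∈ s | D j ≤ D i} := by
      simp only [sum_add_distrib]
      rw [sum_comm (f := fun i j => if D i ≤ D j then x j else 0)]
      simp only [hrow]; ring

lemma sum_sum_min_inv_abs_sub_le (n : ℕ) (k : ℤ) :
    ∑ i ∈ range n, ∑ j ∈ range n, min |(i : ℝ) - k|⁻¹ |(j : ℝ) - k|⁻¹ ≤ 6 * n := by
  have hx : ∀ i : ℕ, |(i : ℝ) - k|⁻¹ = ((|(i : ℤ) - k| : ℤ) : ℝ)⁻¹ := by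
    intro i; push_cast; rfl
  refine (sum_sum_min_le _ (fun i _ => by positivity) fun i : ℕ => |(i : ℤ) - k|).trans ?_
  have hrow : ∀ i ∈ range n, |(i : ℝ) - k|⁻¹ * #{j ∈ range n | |((j : ℕ) : ℤ) - k| ≤ |(i : ℤ) - k|}
      ≤ 3 := by
    intro i _
    rw [mul_comm, hx]
    calc _ ≤ (2 * |(i : ℤ) - k| + 1 : ℝ) * ((|(i : ℤ) - k| : ℤ) : ℝ)⁻¹ := by
          gcongr
          exact_mod_cast card_filter_abs_sub_le _ Nat.cast_injective k (abs_nonneg _)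
      _ ≤ 3 := by exact_mod_cast two_mul_add_one_mul_inv_le_three (abs_nonneg ((i : ℤ) - k))
  have := sum_le_sum hrow
  simp only [sum_const, card_range, nsmul_eq_mul] at this
  linarith

lemma triSqEntry_le (n : ℕ) (a u b w : ℤ) :
    triSqEntry n (a, u) (b, w) ≤
      ∑ k ∈ Icc (-(n : ℤ)) n, 3 * min |(a : ℝ) - k|⁻¹ |(b : ℝ) - k|⁻¹ :=
  calc triSqEntry n (a, u) (b, w)
      ≤ ∑ q ∈ Icc (-(n : ℤ)) n ×ˢ Icc (-(n : ℤ)) n, triEntry (a, u) q * triEntry q (b, w) :=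
        sum_le_sum_of_subset_of_nonneg (filter_subset _ _)
          fun _ _ _ => mul_nonneg (triEntry_nonneg _ _) (triEntry_nonneg _ _)
    _ = ∑ k ∈ Icc (-(n : ℤ)) n, ∑ v ∈ Icc (-(n : ℤ)) n,
          triEntry (a, u) (k, v) * triEntry (k, v) (b, w) := sum_product _ _ _
    _ ≤ _ := sum_le_sum fun k _ => sum_triEntry_mul_triEntry_le_min _ a u b w k

lemma pathQuadForm_le {n : ℕ} (hn : 1 ≤ n) (p : ℕ → ℤ) : pathQuadForm n p ≤ 54 * n ^ 2 := by
  have hcard : (#(Icc (-(n : ℤ)) n) : ℝ) = 2 * n + 1 := by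
    rw [Int.card_Icc, show (n : ℤ) + 1 - -n = ((2 * n + 1 : ℕ) : ℤ) by push_cast; ring,
      Int.toNat_natCast]
    push_cast; ring
  have hn' : (1 : ℝ) ≤ n := by exact_mod_cast hn
  calc pathQuadForm n p
      ≤ ∑ i ∈ range n, ∑ j ∈ range n, ∑ k ∈ Icc (-(n : ℤ)) n,
          3 * min |(i : ℝ) - k|⁻¹ |(j : ℝ) - k|⁻¹ :=
        sum_le_sum fun i _ => sum_le_sum fun j _ => triSqEntry_le n i (p i) j (p j)
    _ = 3 * ∑ k ∈ Icc (-(n : ℤ)) n, ∑ i ∈ range n, ∑ j ∈ range n,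
          min |(i : ℝ) - k|⁻¹ |(j : ℝ) - k|⁻¹ := by
      simp_rw [mul_sum]
      conv_lhs => enter [2, i]; rw [sum_comm]
      exact sum_comm
    _ ≤ 3 * ∑ _k ∈ Icc (-(n : ℤ)) n, 6 * (n : ℝ) := by
      gcongr with k; exact sum_sum_min_inv_abs_sub_le n k
    _ ≤ 54 * n ^ 2 := by
      rw [sum_const, nsmul_eq_mul, hcard]; nlinarith

lemma abs_sub_le_of_abs_step_le_one {p : ℕ → ℤ} (hs : ∀ i, |p (i + 1) - p i| ≤ 1) {i j : ℕ}
    (hij : i ≤ j) : |p j - p i| ≤ j - i := by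
  induction j, hij using Nat.le_induction with
  | base => simp
  | succ j _ ih =>
    calc |p (j + 1) - p i| = |(p (j + 1) - p j) + (p j - p i)| := by ring_nf
      _ ≤ |p (j + 1) - p j| + |p j - p i| := abs_add_le _ _
      _ ≤ ((j + 1 : ℕ) : ℤ) - i := by push_cast; linarith [hs j]

structure IsDirectedPath (p : ℕ → ℤ) : Prop where
  zero : p 0 = 0
  step : ∀ i, |p (i + 1) - p i| = 1

namespace IsDirectedPath

variable {p : ℕ → ℤ}

lemma abs_sub_le (hp : IsDirectedPath p) {i j : ℕ} (hij : i ≤ j) : |p j - p i| ≤ j - i :=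
  abs_sub_le_of_abs_step_le_one (fun i => (hp.step i).le) hij

lemma abs_le (hp : IsDirectedPath p) (m : ℕ) : |p m| ≤ m := by
  simpa [hp.zero] using hp.abs_sub_le (Nat.zero_le m)

lemma sub_emod_two (hp : IsDirectedPath p) (m : ℕ) : ((m : ℤ) - p m) % 2 = 0 := by
  induction m with
  | zero => simp [hp.zero]
  | succ k ih =>
    have := hp.step k
    rcases abs_eq (zero_le_one' ℤ) |>.mp this with h | h <;> push_cast <;> omega

end IsDirectedPath

lemma card_div_sq_le_triSqEntry {p : ℕ → ℤ} (hp : IsDirectedPath p) {n i j : ℕ}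
    (hi : i < n / 4) (hj : j < n / 4) :
    ((n - n / 2) * (n / 4) : ℕ) / (n : ℝ) ^ 2 ≤ triSqEntry n ((i : ℤ), p i) ((j : ℤ), p j) := by
  obtain ⟨m, him, hjm, hm⟩ : ∃ m, i ≤ m ∧ j ≤ m ∧ m < n / 4 :=
    ⟨max i j, le_max_left i j, le_max_right i j, max_lt hi hj⟩
  have hpi := abs_le.mp (hp.abs_sub_le him)
  have hpj := abs_le.mp (hp.abs_sub_le hjm)
  have hpm := abs_le.mp (hp.abs_le m)
  have hpar := hp.sub_emod_two m
  set D := Ico (n / 2) n ×ˢ range (n / 4)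
  -- `e` parametrises the forward cone of `π_m` in the columns `k ≥ n / 2`.
  let e : ℕ × ℕ → ℤ × ℤ := fun x => ((x.1 : ℤ), p m + ((x.1 : ℤ) - m) - 2 * x.2)
  have hD : ∀ x ∈ D, n / 2 ≤ x.1 ∧ x.1 < n ∧ x.2 < n / 4 := by
    intro x hx
    simp only [D, mem_product, mem_Ico, mem_range] at hx
    exact ⟨hx.1.1, hx.1.2, hx.2⟩
  have hmem : ∀ x ∈ D, e x ∈ triVertices n := by
    intro x hx
    obtain ⟨h1, h2, h3⟩ := hD x hx
    rw [mem_triVertices, abs_le]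
    simp only [e]
    omega
  have hinj : Set.InjOn e D := by
    intro x _ y _ hxy
    simp only [e, Prod.mk.injEq, Nat.cast_inj] at hxy
    exact Prod.ext hxy.1 (by omega)
  have hval : ∀ x ∈ D, (n : ℝ)⁻¹ * (n : ℝ)⁻¹ ≤
      triEntry ((i : ℤ), p i) (e x) * triEntry (e x) ((j : ℤ), p j) := by
    intro x hx
    obtain ⟨h1, h2, h3⟩ := hD x hx
    rw [triEntry_comm (e x)]
    gcongr
    · exact triEntry_nonneg _ _
    all_goals refine inv_le_triEntry_of_lt ?_ ?_ (abs_le.mpr ⟨?_, ?_⟩) <;> omega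
  calc ((n - n / 2) * (n / 4) : ℕ) / (n : ℝ) ^ 2
      = ∑ _x ∈ D, (n : ℝ)⁻¹ * (n : ℝ)⁻¹ := by
        rw [sum_const, nsmul_eq_mul, card_product, Nat.card_Ico, card_range]; ring
    _ ≤ ∑ x ∈ D, triEntry ((i : ℤ), p i) (e x) * triEntry (e x) ((j : ℤ), p j) :=
        sum_le_sum hval
    _ = ∑ q ∈ D.image e, triEntry ((i : ℤ), p i) q * triEntry q ((j : ℤ), p j) := by
        rw [sum_image hinj]
    _ ≤ triSqEntry n ((i : ℤ), p i) ((j : ℤ), p j) :=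
        sum_le_sum_of_subset_of_nonneg (image_subset_iff.mpr hmem)
          fun _ _ _ => mul_nonneg (triEntry_nonneg _ _) (triEntry_nonneg _ _)

lemma pathQuadForm_ge {p : ℕ → ℤ} (hp : IsDirectedPath p) {n : ℕ} (hn : 8 ≤ n) :
    (n : ℝ) ^ 2 / 1024 ≤ pathQuadForm n p := by
  set c : ℝ := ((n - n / 2) * (n / 4) : ℕ) / (n : ℝ) ^ 2
  have hsub : range (n / 4) ×ˢ range (n / 4) ⊆ range n ×ˢ range n := by
    gcongr <;> exact Nat.div_le_self n 4
  have hquarter : (n : ℝ) / 8 ≤ (n / 4 : ℕ) := by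
    rw [div_le_iff₀ (by norm_num)]; exact_mod_cast (by omega : n ≤ (n / 4) * 8)
  have hhalf : (n : ℝ) / 2 ≤ (n - n / 2 : ℕ) := by
    rw [div_le_iff₀ (by norm_num)]; exact_mod_cast (by omega : n ≤ (n - n / 2) * 2)
  have hn0 : (0 : ℝ) < n := by positivity
  calc (n : ℝ) ^ 2 / 1024 = ((n : ℝ) / 8) ^ 2 * ((n / 2) * (n / 8) / (n : ℝ) ^ 2) := by
        field_simp; ring
    _ ≤ ((n / 4 : ℕ) : ℝ) ^ 2 * c := by
        simp only [c]; push_cast [Nat.cast_mul]; gcongr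
    _ = #(range (n / 4) ×ˢ range (n / 4)) • c := by
        rw [card_product, card_range, nsmul_eq_mul]; push_cast; ring
    _ ≤ ∑ x ∈ range (n / 4) ×ˢ range (n / 4), triSqEntry n ((x.1 : ℤ), p x.1) ((x.2 : ℤ), p x.2) :=
        card_nsmul_le_sum _ _ _ fun x hx => by
          rw [mem_product, mem_range, mem_range] at hx
          exact card_div_sq_le_triSqEntry hp hx.1 hx.2
    _ ≤ ∑ x ∈ range n ×ˢ range n, triSqEntry n ((x.1 : ℤ), p x.1) ((x.2 : ℤ), p x.2) :=
        sum_le_sum_of_subset_of_nonneg hsub fun _ _ _ => triSqEntry_nonneg _ _ _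
    _ = pathQuadForm n p := sum_product _ _ _

lemma one_le_pathQuadForm {p : ℕ → ℤ} (h0 : p 0 = 0) {n : ℕ} (hn : 2 ≤ n) :
    1 ≤ pathQuadForm n p := by
  have h0n : 0 ∈ range n := mem_range.mpr (by omega)
  have hq : ((1 : ℤ), (1 : ℤ)) ∈ triVertices n := by
    rw [mem_triVertices]; exact ⟨zero_le_one, by omega, by norm_num, by norm_num⟩
  calc (1 : ℝ) = triEntry ((0 : ℤ), p 0) (1, 1) * triEntry (1, 1) ((0 : ℤ), p 0) := by
        simp [triEntry, h0]
    _ ≤ triSqEntry n ((0 : ℤ), p 0) ((0 : ℤ), p 0) :=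
        single_le_sum (f := fun q => triEntry ((0 : ℤ), p 0) q * triEntry q ((0 : ℤ), p 0))
          (fun _ _ => mul_nonneg (triEntry_nonneg _ _) (triEntry_nonneg _ _)) hq
    _ ≤ ∑ j ∈ range n, triSqEntry n ((0 : ℤ), p 0) ((j : ℤ), p j) :=
        single_le_sum (f := fun j : ℕ => triSqEntry n ((0 : ℤ), p 0) ((j : ℤ), p j))
          (fun _ _ => triSqEntry_nonneg _ _ _) h0n
    _ ≤ pathQuadForm n p :=
        single_le_sum (f := fun i : ℕ => ∑ j ∈ range n, triSqEntry n ((i : ℤ), p i) ((j : ℤ), p j))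
          (fun _ _ => sum_nonneg fun _ _ => triSqEntry_nonneg _ _ _) h0n

/-- For any directed path `π_i = (i, p i)` with `p 0 = 0` and unit vertical
steps, there are constants `c, C > 0` such that for all `n ≥ 2`,
`c n² ≤ 𝟙_π^T A_n² 𝟙_π ≤ C n²`, where
`𝟙_π^T A_n² 𝟙_π = ∑_{i,j < n} ∑_{q ∈ V_n} A_n[(i,p i), q] · A_n[q, (j,p j)]`. -/
theorem path_quadratic_form_sq_asymp :
    ∃ c C : ℝ, 0 < c ∧ 0 < C ∧ ∀ n : ℕ, 2 ≤ n → ∀ p : ℕ → ℤ, p 0 = 0 →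
      (∀ i : ℕ, |p (i + 1) - p i| = 1) →
      c * (n : ℝ) ^ 2 ≤
        (∑ i ∈ Finset.range n, ∑ j ∈ Finset.range n, ∑ q ∈ triVertices n,
          triEntry ((i : ℤ), p i) q * triEntry q ((j : ℤ), p j)) ∧
      (∑ i ∈ Finset.range n, ∑ j ∈ Finset.range n, ∑ q ∈ triVertices n,
          triEntry ((i : ℤ), p i) q * triEntry q ((j : ℤ), p j)) ≤
        C * (n : ℝ) ^ 2 := by
  refine ⟨1 / 1024, 54, by norm_num, by norm_num, fun n hn p h0 hs => ?_⟩
  have hp : IsDirectedPath p := ⟨h0, hs⟩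
  change 1 / 1024 * (n : ℝ) ^ 2 ≤ pathQuadForm n p ∧ pathQuadForm n p ≤ 54 * (n : ℝ) ^ 2
  refine ⟨?_, pathQuadForm_le (by omega) p⟩
  rcases lt_or_ge n 8 with hsmall | hbig
  · have hn7 : (n : ℝ) ≤ 7 := by exact_mod_cast Nat.le_of_lt_succ hsmall
    nlinarith [one_le_pathQuadForm h0 hn]
  · linarith [pathQuadForm_ge hp hbig]
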